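/- In the Key Lemma setting, the stronger inductive statement holds: for every 1 ≤ i ≤ m, the infected graph before step i equals G − {f_i, f_{i+1}, …, f_m}, and at step i exactly the single new edge f_i is infected (it completes exactly one new copy of K_r, namely on the vertex set e_i). -/
import Mathlib


/-- One step of the `K_r`-bootstrap process. -/
def krStep (r : ℕ) {V : Type*} (G : SimpleGraph V) : SimpleGraph V :=
  SimpleGraph.fromRel (fun u v => G.Adj u v ∨
    ∃ s : Finset V, u ∈ s ∧ v ∈ s ∧ s.card = r ∧
      ∀ a ∈ s, ∀ b ∈ s, a ≠ b → ¬(a = u ∧ b = v) → ¬(a = v ∧ b = u) → G.Adj a b)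

/-- The 2-skeleton of a hypergraph given by its edges `e i`. -/
def skeleton {n m : ℕ} (e : Fin m → Finset (Fin n)) : SimpleGraph (Fin n) :=
  SimpleGraph.fromRel (fun u v => ∃ i, u ∈ e i ∧ v ∈ e i)

/-- Graph after `k` steps (the target formula). -/
def GGaux {n m : ℕ} (e f : Fin m → Finset (Fin n)) (k : ℕ) : SimpleGraph (Fin n) :=
  skeleton e \
    SimpleGraph.fromRel (fun u v => ∃ i : Fin m, k ≤ (i : ℕ) ∧ u ∈ f i ∧ v ∈ f i)

lemma krStep_adj {r : ℕ} {V : Type*} (G : SimpleGraph V) (u v : V) :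
    (krStep r G).Adj u v ↔ u ≠ v ∧ (G.Adj u v ∨
      ∃ s : Finset V, u ∈ s ∧ v ∈ s ∧ s.card = r ∧
        ∀ a ∈ s, ∀ b ∈ s, a ≠ b → ¬(a = u ∧ b = v) → ¬(a = v ∧ b = u) → G.Adj a b) := by
  simp only [krStep, SimpleGraph.fromRel_adj]
  constructor
  · rintro ⟨huv, h | h⟩
    · exact ⟨huv, h⟩
    · rcases h with h | ⟨s, hv, hu, hc, hcl⟩
      · exact ⟨huv, Or.inl h.symm⟩
      · exact ⟨huv, Or.inr ⟨s, hu, hv, hc,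
          fun a ha b hb hab h1 h2 => hcl a ha b hb hab h2 h1⟩⟩
  · rintro ⟨huv, h⟩
    exact ⟨huv, Or.inl h⟩

lemma GGaux_adj {n m : ℕ} (e f : Fin m → Finset (Fin n)) (k : ℕ) (u v : Fin n) :
    (GGaux e f k).Adj u v ↔ u ≠ v ∧ (∃ i, u ∈ e i ∧ v ∈ e i) ∧
      ∀ i : Fin m, k ≤ (i : ℕ) → ¬(u ∈ f i ∧ v ∈ f i) := by
  simp only [GGaux, SimpleGraph.sdiff_adj, skeleton, SimpleGraph.fromRel_adj]
  constructor
  · rintro ⟨⟨huv, h⟩, h2⟩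
    refine ⟨huv, ?_, ?_⟩
    · rcases h with ⟨i, ha, hb⟩ | ⟨i, ha, hb⟩
      · exact ⟨i, ha, hb⟩
      · exact ⟨i, hb, ha⟩
    · rintro i hi ⟨hu, hv⟩
      exact h2 ⟨huv, Or.inl ⟨i, hi, hu, hv⟩⟩
  · rintro ⟨huv, ⟨i, hu, hv⟩, h⟩
    refine ⟨⟨huv, Or.inl ⟨i, hu, hv⟩⟩, ?_⟩
    rintro ⟨-, ⟨j, hj, h1, h2⟩ | ⟨j, hj, h1, h2⟩⟩
    · exact h j hj ⟨h1, h2⟩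
    · exact h j hj ⟨h2, h1⟩

section main

variable {r n m : ℕ} {e f : Fin m → Finset (Fin n)}

lemma finj (hff : ∀ i j : Fin m, f i ⊆ e j ↔ (j = i ∨ (j : ℕ) = (i : ℕ) + 1))
    {i j : Fin m} (h : f i = f j) : i = j := by
  have h1 : f i ⊆ e i := (hff i i).mpr (Or.inl rfl)
  have h2 : f j ⊆ e j := (hff j j).mpr (Or.inl rfl)
  have h3 : f j ⊆ e i := h ▸ h1
  have h4 : f i ⊆ e j := h.symm ▸ h2
  obtain h5 | h5 := (hff j i).mp h3
  · exact h5
  · obtain h6 | h6 := (hff i j).mp h4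
    · exact h6.symm
    · exfalso; omega

lemma fpair (hf2 : ∀ i, (f i).card = 2) {i : Fin m} {u v : Fin n}
    (hu : u ∈ f i) (hv : v ∈ f i) (huv : u ≠ v) : f i = {u, v} := by
  have hsub : ({u, v} : Finset (Fin n)) ⊆ f i := by
    simp [Finset.insert_subset_iff, hu, hv]
  refine (Finset.eq_of_subset_of_card_le hsub ?_).symm
  rw [hf2]
  rw [Finset.card_insert_of_notMem (by simp [huv]), Finset.card_singleton]

lemma step_lemma (hcard : ∀ i, (e i).card = r) (hf2 : ∀ i, (f i).card = 2)
    (hKrMinusFree : ∀ s : Finset (Fin n), s.card = r →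
      ∀ a ∈ s, ∀ b ∈ s, a ≠ b →
        (∀ u ∈ s, ∀ v ∈ s, u ≠ v → ¬(u = a ∧ v = b) → ¬(u = b ∧ v = a) →
          (skeleton e).Adj u v) →
        ∃ j, s ⊆ e j)
    (hff : ∀ i j : Fin m, f i ⊆ e j ↔ (j = i ∨ (j : ℕ) = (i : ℕ) + 1))
    (k : ℕ) (hk : k < m) :
    krStep r (GGaux e f k) = GGaux e f (k + 1) := by
  ext u v
  rw [krStep_adj, GGaux_adj]
  simp only [GGaux_adj]
  constructor
  · rintro ⟨huv, hGk | ⟨s, hus, hvs, hcardS, hclique⟩⟩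
    · obtain ⟨-, hskel, hnot⟩ := hGk
      exact ⟨huv, hskel, fun i hi => hnot i (by omega)⟩
    · -- `u v` is a newly infected pair; `s` is a `K_r^-` in the skeleton
      have hskelcl : ∀ a ∈ s, ∀ b ∈ s, a ≠ b → ¬(a = u ∧ b = v) → ¬(a = v ∧ b = u) →
          (skeleton e).Adj a b := by
        intro a ha b hb hab h1 h2
        obtain ⟨hab', hsk, -⟩ := hclique a ha b hb hab h1 h2
        rw [skeleton, SimpleGraph.fromRel_adj]
        exact ⟨hab', Or.inl hsk⟩
      obtain ⟨j, hsj⟩ := hKrMinusFree s hcardS u hus v hvs huv hskelcl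
      have hse : s = e j := Finset.eq_of_subset_of_card_le hsj (by rw [hcard, hcardS])
      refine ⟨huv, ⟨j, hsj hus, hsj hvs⟩, ?_⟩
      rintro i hi ⟨hufi, hvfi⟩
      have hfi : f i = {u, v} := fpair hf2 hufi hvfi huv
      have hfisub : f i ⊆ e j := by
        rw [hfi, ← hse]
        simp [Finset.insert_subset_iff, hus, hvs]
      -- find a "bad" pair inside `s` distinct from `{u,v}` which is removed in `GGaux k`
      obtain hji | hji := (hff i j).mp hfisub
      · -- use `f (i-1)`
        have hji' : (j : ℕ) = (i : ℕ) := by rw [hji]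
        have hi1 : (i : ℕ) - 1 < m := by omega
        set i' : Fin m := ⟨(i : ℕ) - 1, hi1⟩ with hi'def
        have hfi'sub : f i' ⊆ e j := (hff i' j).mpr (Or.inr (by simp [hi'def]; omega))
        have hne : f i' ≠ f i := by
          intro h
          have := congrArg Fin.val (finj hff h)
          simp [hi'def] at this
          omega
        obtain ⟨p, q, hpq, hfi'⟩ := Finset.card_eq_two.mp (hf2 i')
        have hp : p ∈ s := by rw [hse]; exact hfi'sub (by rw [hfi']; simp)
        have hq : q ∈ s := by rw [hse]; exact hfi'sub (by rw [hfi']; simp)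
        have h1 : ¬(p = u ∧ q = v) := by
          rintro ⟨rfl, rfl⟩; exact hne (by rw [hfi', hfi])
        have h2 : ¬(p = v ∧ q = u) := by
          rintro ⟨rfl, rfl⟩; exact hne (by rw [hfi', hfi, Finset.pair_comm])
        obtain ⟨-, -, hbad⟩ := hclique p hp q hq hpq h1 h2
        exact hbad i' (by simp [hi'def]; omega) ⟨by rw [hfi']; simp, by rw [hfi']; simp⟩
      · -- use `f j`
        have hfjsub : f j ⊆ e j := (hff j j).mpr (Or.inl rfl)
        have hne : f j ≠ f i := by
          intro h
          have := congrArg Fin.val (finj hff h)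
          omega
        obtain ⟨p, q, hpq, hfj⟩ := Finset.card_eq_two.mp (hf2 j)
        have hp : p ∈ s := by rw [hse]; exact hfjsub (by rw [hfj]; simp)
        have hq : q ∈ s := by rw [hse]; exact hfjsub (by rw [hfj]; simp)
        have h1 : ¬(p = u ∧ q = v) := by
          rintro ⟨rfl, rfl⟩; exact hne (by rw [hfj, hfi])
        have h2 : ¬(p = v ∧ q = u) := by
          rintro ⟨rfl, rfl⟩; exact hne (by rw [hfj, hfi, Finset.pair_comm])
        obtain ⟨-, -, hbad⟩ := hclique p hp q hq hpq h1 h2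
        exact hbad j (by omega) ⟨by rw [hfj]; simp, by rw [hfj]; simp⟩
  · rintro ⟨huv, ⟨jj, huj, hvj⟩, hnot⟩
    refine ⟨huv, ?_⟩
    by_cases hGk : ∀ i : Fin m, k ≤ (i : ℕ) → ¬(u ∈ f i ∧ v ∈ f i)
    · exact Or.inl ⟨huv, ⟨jj, huj, hvj⟩, hGk⟩
    · push_neg at hGk
      obtain ⟨i, hki, hufi, hvfi⟩ := hGk
      have hik : (i : ℕ) = k := by
        by_contra h
        exact hnot i (by omega) ⟨hufi, hvfi⟩
      have hfik : f i ⊆ e i := (hff i i).mpr (Or.inl rfl)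
      refine Or.inr ⟨e i, hfik hufi, hfik hvfi, hcard i, ?_⟩
      intro a ha b hb hab h1 h2
      refine ⟨hab, ⟨i, ha, hb⟩, ?_⟩
      rintro i' hki' ⟨hafi', hbfi'⟩
      have hfi' : f i' = {a, b} := fpair hf2 hafi' hbfi' hab
      have hsub : f i' ⊆ e i := by
        rw [hfi']
        simp [Finset.insert_subset_iff, ha, hb]
      obtain h' | h' := (hff i' i).mp hsub
      · -- i = i' : then {a,b} = f i = {u,v}, contradicting exclusion of the pair
        have hfi : f i = {u, v} := fpair hf2 hufi hvfi huv
        have heq : ({a, b} : Finset (Fin n)) = {u, v} := by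
          rw [← hfi', ← h', hfi]
        have ha' : a = u ∨ a = v := by
          have : a ∈ ({u, v} : Finset (Fin n)) := by rw [← heq]; simp
          simpa using this
        have hb' : b = u ∨ b = v := by
          have : b ∈ ({u, v} : Finset (Fin n)) := by rw [← heq]; simp
          simpa using this
        rcases ha' with rfl | rfl <;> rcases hb' with h'' | h'' <;> tauto
      · -- (i:ℕ) = i' + 1, impossible since i = k ≤ i'
        omega
end main

theorem stmt_7 (r n m : ℕ) (hr : 3 ≤ r) (hm : 1 ≤ m)
    (e f : Fin m → Finset (Fin n))
    (hcard : ∀ i, (e i).card = r)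
    (hf2 : ∀ i, (f i).card = 2)
    (hKrMinusFree : ∀ s : Finset (Fin n), s.card = r →
      ∀ a ∈ s, ∀ b ∈ s, a ≠ b →
        (∀ u ∈ s, ∀ v ∈ s, u ≠ v → ¬(u = a ∧ v = b) → ¬(u = b ∧ v = a) →
          (skeleton e).Adj u v) →
        ∃ j, s ⊆ e j)
    (hff : ∀ i j : Fin m, f i ⊆ e j ↔ (j = i ∨ (j : ℕ) = (i : ℕ) + 1))
    (G₀ : SimpleGraph (Fin n))
    (hG₀ : G₀ = skeleton e \ SimpleGraph.fromRel (fun u v => ∃ i, u ∈ f i ∧ v ∈ f i)) :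
    -- after `k` steps, the infected graph is `G` minus the pairs `f i` for `i ≥ k`
    (∀ k ≤ m, (krStep r)^[k] G₀ =
        skeleton e \
          SimpleGraph.fromRel (fun u v => ∃ i : Fin m, k ≤ (i : ℕ) ∧ u ∈ f i ∧ v ∈ f i)) ∧
    -- at step `k + 1` exactly the single new edge `f k` becomes infected
    (∀ k (hk : k < m),
      ((krStep r)^[k + 1] G₀).edgeSet =
        ((krStep r)^[k] G₀).edgeSet ∪
          {p : Sym2 (Fin n) | ∃ a b, a ∈ f ⟨k, hk⟩ ∧ b ∈ f ⟨k, hk⟩ ∧ a ≠ b ∧ p = s(a, b)}) := by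
  have h1 : ∀ k ≤ m, (krStep r)^[k] G₀ = GGaux e f k := by
    intro k
    induction k with
    | zero =>
      intro _
      simp only [Function.iterate_zero, id]
      rw [hG₀]
      unfold GGaux
      congr 1
      ext u v
      simp [SimpleGraph.fromRel_adj]
    | succ k ih =>
      intro hk
      rw [Function.iterate_succ_apply', ih (by omega),
        step_lemma hcard hf2 hKrMinusFree hff k (by omega)]
  constructor
  · exact fun k hk => h1 k hk
  · intro k hk
    rw [h1 (k + 1) (by omega), h1 k (le_of_lt hk)]
    ext p
    induction p with
    | h u v =>
      simp only [SimpleGraph.mem_edgeSet, Set.mem_union, Set.mem_setOf_eq, GGaux_adj]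
      set k' : Fin m := ⟨k, hk⟩ with hk'def
      constructor
      · rintro ⟨huv, hskel, hnot⟩
        by_cases hGk : ∀ i : Fin m, k ≤ (i : ℕ) → ¬(u ∈ f i ∧ v ∈ f i)
        · exact Or.inl ⟨huv, hskel, hGk⟩
        · push_neg at hGk
          obtain ⟨i, hki, hufi, hvfi⟩ := hGk
          have hik : (i : ℕ) = k := by
            by_contra h
            exact hnot i (by omega) ⟨hufi, hvfi⟩
          have hii : i = k' := Fin.ext (by simp [hk'def, hik])
          exact Or.inr ⟨u, v, hii ▸ hufi, hii ▸ hvfi, huv, rfl⟩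
      · rintro (⟨huv, hskel, hnot⟩ | ⟨a, b, ha, hb, hab, hp⟩)
        · exact ⟨huv, hskel, fun i hi => hnot i (by omega)⟩
        · have hcases : (u = a ∧ v = b) ∨ (u = b ∧ v = a) := by
            rwa [Sym2.eq_iff] at hp
          have hu : u ∈ f k' := by rcases hcases with ⟨rfl, rfl⟩ | ⟨rfl, rfl⟩ <;> assumption
          have hv : v ∈ f k' := by rcases hcases with ⟨rfl, rfl⟩ | ⟨rfl, rfl⟩ <;> assumption
          have huv : u ≠ v := by
            rcases hcases with ⟨rfl, rfl⟩ | ⟨rfl, rfl⟩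
            · exact hab
            · exact hab.symm
          have hfk : f k' ⊆ e k' := (hff k' k').mpr (Or.inl rfl)
          refine ⟨huv, ⟨k', hfk hu, hfk hv⟩, ?_⟩
          rintro i hi ⟨hufi, hvfi⟩
          have h1 : f i = {u, v} := fpair hf2 hufi hvfi huv
          have h2 : f k' = {u, v} := fpair hf2 hu hv huv
          have : i = k' := finj hff (h1.trans h2.symm)
          have : (i : ℕ) = k := by rw [this]
          omega
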